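/- arXiv:2510.04205 — 2 statements merged into one kernel-verified Lean document; each statement's English description precedes it below -/
import Mathlib

section
/- If the interval feasibility relation is downward closed and every singleton interval [t_{i-1}, t_i] is feasible, then the greedy algorithm that repeatedly extends the current segment as far right as possible produces a partition of [t₀, t_k] into feasible intervals using the minimum possible number of intervals. -/
/-!
Greedy stays ahead: by induction on `n`, the `n`-th breakpoint of any valid partition is at most
the `n`-th greedy breakpoint. Otherwise the `(n+1)`-st interval of the other partition, cut down on
the left to start at the `n`-th greedy breakpoint, would be a feasible segment reaching beyond
the `(n+1)`-st greedy breakpoint. Hence, if the other partition had fewer intervals, it would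
reach `k` while the greedy one is still strictly left of `k`.
-/

section GreedyPartition

variable {F : ℕ → ℕ → Prop} {k r r' : ℕ} {g : Fin (r + 1) → ℕ} {g' : Fin (r' + 1) → ℕ}

theorem greedy_stays_ahead
    (hleft : ∀ j j' i, F j i → j ≤ j' → j' < i → F j' i)
    (hmono : Monotone g)
    (hmax : ∀ j : Fin r, ∀ i, g j.succ < i → i ≤ k → ¬ F (g j.castSucc) i)
    (hg'0 : g' 0 = 0) (hg'k : g' (Fin.last r') = k) (hmono' : Monotone g')
    (hstep' : ∀ j : Fin r', F (g' j.castSucc) (g' j.succ)) :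
    ∀ n (hn : n < r + 1) (hn' : n < r' + 1), g' ⟨n, hn'⟩ ≤ g ⟨n, hn⟩
  | 0, _, _ => hg'0.trans_le (Nat.zero_le _)
  | n + 1, hn, hn' => by
    by_contra! hahead
    have ih := greedy_stays_ahead hleft hmono hmax hg'0 hg'k hmono' hstep' n
      (by omega) (by omega)
    have hk : g' ⟨n + 1, hn'⟩ ≤ k := hg'k ▸ hmono' (Fin.le_last _)
    have hgreedy_le : g ⟨n, by omega⟩ ≤ g ⟨n + 1, hn⟩ := hmono (Fin.mk_le_mk.mpr n.le_succ)
    have hshrunk : F (g ⟨n, by omega⟩) (g' ⟨n + 1, hn'⟩) :=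
      hleft _ _ _ (hstep' ⟨n, by omega⟩) ih (by omega)
    exact hmax ⟨n, by omega⟩ _ hahead hk hshrunk

end GreedyPartition

theorem greedy_optimal_general (k : ℕ) (F : ℕ → ℕ → Prop)
    (hdown : ∀ j i j' i', F j i → j ≤ j' → j' < i' → i' ≤ i → F j' i')
    (r : ℕ) (g : Fin (r + 1) → ℕ)
    (hgk : g (Fin.last r) = k) (hmono : StrictMono g)
    (hmax : ∀ j : Fin r, ∀ i, g j.succ < i → i ≤ k → ¬ F (g j.castSucc) i)
    (r' : ℕ) (g' : Fin (r' + 1) → ℕ)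
    (hg'0 : g' 0 = 0) (hg'k : g' (Fin.last r') = k) (hmono' : StrictMono g')
    (hstep' : ∀ j : Fin r', F (g' j.castSucc) (g' j.succ)) :
    r ≤ r' := by
  by_contra! hfewer
  have hahead := greedy_stays_ahead (fun j j' i hF hj hji => hdown j i j' i hF hj hji le_rfl)
    hmono.monotone hmax hg'0 hg'k hmono'.monotone hstep' r' (by omega) r'.lt_succ_self
  have hbefore_end : g ⟨r', by omega⟩ < g (Fin.last r) := hmono (Fin.mk_lt_mk.mpr hfewer)
  have hg'_last : g' ⟨r', r'.lt_succ_self⟩ = k := hg'k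
  omega

/-- Greedy optimality for downward-closed interval feasibility: a maximal-step
greedy partition uses the minimum possible number of intervals. -/
theorem greedy_optimal (k : ℕ) (F : ℕ → ℕ → Prop)
    (hdown : ∀ j i j' i', F j i → j ≤ j' → j' < i' → i' ≤ i → F j' i')
    (hbase : ∀ i, 0 < i → i ≤ k → F (i - 1) i)
    (r : ℕ) (g : Fin (r + 1) → ℕ)
    (hg0 : g 0 = 0) (hgk : g (Fin.last r) = k) (hmono : StrictMono g)
    (hstep : ∀ j : Fin r, F (g j.castSucc) (g j.succ))
    (hmax : ∀ j : Fin r, ∀ i, g j.succ < i → i ≤ k → ¬ F (g j.castSucc) i)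
    (r' : ℕ) (g' : Fin (r' + 1) → ℕ)
    (hg'0 : g' 0 = 0) (hg'k : g' (Fin.last r') = k) (hmono' : StrictMono g')
    (hstep' : ∀ j : Fin r', F (g' j.castSucc) (g' j.succ)) :
    r ≤ r' :=
  greedy_optimal_general k F hdown r g hgk hmono hmax r' g' hg'0 hg'k hmono' hstep'
end

section
/- For a monotone feasibility structure (downward-closed, with all adjacent intervals feasible), the DP value dp[i] defined by dp[0] = 1 and dp[i] = 1 + min_{j < i, F(j,i)} dp[j] is nondecreasing in i. -/
def dpCandidates (F : ℕ → ℕ → Prop) (dp : ℕ → ℕ) (i : ℕ) : Set ℕ :=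
  {v | ∃ j < i, F j i ∧ v = dp j + 1}

/-- If an optimal last piece `[j, i + 1)` has `j = i`, then `dp (i + 1) = dp i + 1`; otherwise
`j < i` and `[j, i)` is feasible as well, so `dp i ≤ dp j + 1 = dp (i + 1)`. -/
theorem dp_le_dp_succ {F : ℕ → ℕ → Prop} {dp : ℕ → ℕ} {i : ℕ}
    (hdown : ∀ j < i, F j (i + 1) → F j i)
    (hdp : 0 < i → dp i ∈ lowerBounds (dpCandidates F dp i))
    (hdp_succ : dp (i + 1) ∈ dpCandidates F dp (i + 1)) : dp i ≤ dp (i + 1) := by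
  obtain ⟨j, hj, hF, hdp_eq⟩ := hdp_succ
  rcases Nat.lt_succ_iff_lt_or_eq.mp hj with hji | rfl
  · exact hdp_eq ▸ hdp (by omega) ⟨j, hji, hdown j hji hF, rfl⟩
  · omega

theorem dp_monotone_general (k : ℕ) (F : ℕ → ℕ → Prop)
    (hdown : ∀ j i j' i', F j i → j ≤ j' → j' < i' → i' ≤ i → F j' i')
    (dp : ℕ → ℕ)
    (hdp : ∀ i, 0 < i → i ≤ k →
      IsLeast {v : ℕ | ∃ j < i, F j i ∧ v = dp j + 1} (dp i)) :
    ∀ i i', i ≤ i' → i' ≤ k → dp i ≤ dp i' := by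
  have hmono : MonotoneOn dp (Set.Iic k) := by
    refine monotoneOn_of_le_succ Set.ordConnected_Iic fun i _ _ hsucc => ?_
    rw [Order.succ_eq_add_one] at hsucc ⊢
    have hsucc : i + 1 ≤ k := hsucc
    exact dp_le_dp_succ (fun j hj hF => hdown j (i + 1) j i hF le_rfl hj i.le_succ)
      (fun hi => (hdp i hi (by omega)).2) (hdp (i + 1) i.succ_pos hsucc).1
  intro i i' hii' hi'k
  exact hmono (hii'.trans hi'k) hi'k hii'

/-- Monotonicity of the DP values: for a downward-closed feasibility structure
with all adjacent intervals feasible, dp[i] is nondecreasing in i. -/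
theorem dp_monotone (k : ℕ) (F : ℕ → ℕ → Prop)
    (hdown : ∀ j i j' i', F j i → j ≤ j' → j' < i' → i' ≤ i → F j' i')
    (hbase : ∀ i, 0 < i → i ≤ k → F (i - 1) i)
    (dp : ℕ → ℕ) (hdp0 : dp 0 = 1)
    (hdp : ∀ i, 0 < i → i ≤ k →
      IsLeast {v : ℕ | ∃ j < i, F j i ∧ v = dp j + 1} (dp i)) :
    ∀ i i', i ≤ i' → i' ≤ k → dp i ≤ dp i' :=
  dp_monotone_general k F hdown dp hdp
end
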